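/- Let G be a complex m×n matrix with ‖G v‖ ≥ γ₀ ‖v‖ for all v (γ₀ > 0), set A = Gᴴ G, K = A⁻¹ Gᴴ, P = G A⁻¹ Gᴴ, let b ∈ ℂⁿ, and let w(t) = exp(t M)(b, 0) with blocks (r(t), s(t)). Then the real-valued function C(t) = Re⟨r(t), K s(t)⟩ is differentiable at every t with derivative C′(t) = −‖P s(t)‖² + ‖r(t)‖² − C(t). -/

import Mathlib

open scoped Matrix ComplexInnerProductSpace
open Filter MeasureTheory

noncomputable section

/-- `ℂ^k` with the ℓ² norm. -/
abbrev Evec (k : ℕ) : Type := EuclideanSpace ℂ (Fin k)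

/-- The joint space `ℂⁿ ⊕ ℂᵐ` with the ℓ² norm. -/
abbrev Jvec (n m : ℕ) : Type := EuclideanSpace ℂ (Fin n ⊕ Fin m)

/-- A complex matrix viewed as a continuous linear map between Euclidean spaces,
so that `‖matCLM A‖` is the induced ℓ² operator norm. -/
noncomputable def matCLM {α β : Type*} [Fintype α] [Fintype β] [DecidableEq β]
    (A : Matrix α β ℂ) : EuclideanSpace ℂ β →L[ℂ] EuclideanSpace ℂ α :=
  LinearMap.toContinuousLinearMap (Matrix.toEuclideanLin A)

/-- The block matrix `M = [[0, -Gᴴ], [G, -I]]` on `ℂⁿ ⊕ ℂᵐ`. -/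
def blockM {m n : ℕ} (G : Matrix (Fin m) (Fin n) ℂ) :
    Matrix (Fin n ⊕ Fin m) (Fin n ⊕ Fin m) ℂ :=
  Matrix.fromBlocks 0 (-Gᴴ) G (-1)

/-- The matrix exponential `exp (t M)` as a continuous linear map on `ℂⁿ ⊕ ℂᵐ`. -/
noncomputable def expM {m n : ℕ} (G : Matrix (Fin m) (Fin n) ℂ) (t : ℝ) :
    Jvec n m →L[ℂ] Jvec n m :=
  NormedSpace.exp (t • matCLM (blockM G))

/-- Join two blocks into a joint vector. -/
def joinV {n m : ℕ} (r : Evec n) (s : Evec m) : Jvec n m :=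
  (WithLp.equiv 2 _).symm (Sum.elim ((WithLp.equiv 2 _) r) ((WithLp.equiv 2 _) s))

/-- First (residual `r`) block of a joint vector. -/
def rblock {n m : ℕ} (w : Jvec n m) : Evec n :=
  (WithLp.equiv 2 _).symm fun i => w (Sum.inl i)

/-- Second (residual `s`) block of a joint vector. -/
def sblock {n m : ℕ} (w : Jvec n m) : Evec m :=
  (WithLp.equiv 2 _).symm fun j => w (Sum.inr j)

/-- Residual dynamics `w(t) = exp (t M) (b, 0)`. -/
noncomputable def wdyn {m n : ℕ} (G : Matrix (Fin m) (Fin n) ℂ) (b : Evec n) (t : ℝ) :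
    Jvec n m :=
  expM G t (joinV b 0)

/-- Accumulator `x(t) = ∫₀ᵗ r(τ) dτ`. -/
noncomputable def xacc {m n : ℕ} (G : Matrix (Fin m) (Fin n) ℂ) (b : Evec n) (t : ℝ) :
    Evec n :=
  ∫ τ in (0:ℝ)..t, rblock (wdyn G b τ)

/-!
Differentiating `w(t) = exp (t M) (b, 0)` gives `r' = -Gᴴ s` and `s' = G r - s`, so by the
product rule `C' = -Re ⟨Gᴴ s, K s⟩ + Re ⟨r, K G r⟩ - Re ⟨r, K s⟩`. The Poincaré inequality
makes `G` injective, so `A` is positive definite; then `K G = I`, and `P = G K` is a Hermitian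
idempotent, whence
`⟨Gᴴ s, K s⟩ = ⟨s, P s⟩ = ‖P s‖²`.
-/

open scoped InnerProductSpace

section Calculus

variable {𝕜 E F : Type*} [RCLike 𝕜] [NormedAddCommGroup E] [InnerProductSpace 𝕜 E]
  [NormedAddCommGroup F] [NormedSpace 𝕜 F] [NormedSpace ℝ E] [NormedSpace ℝ F]

theorem HasDerivAt.re_inner_clm_apply {f : ℝ → E} {g : ℝ → F} {f' : E} {g' : F} {t : ℝ}
    (T : F →L[𝕜] E) (hf : HasDerivAt f f' t) (hg : HasDerivAt g g' t) :
    HasDerivAt (fun τ => RCLike.re ⟪f τ, T (g τ)⟫_𝕜)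
      (RCLike.re ⟪f', T (g t)⟫_𝕜 + RCLike.re ⟪f t, T g'⟫_𝕜) t := by
  have hTg := (T.restrictScalars ℝ).hasFDerivAt.comp_hasDerivAt t hg
  exact (RCLike.reCLM.hasFDerivAt.comp_hasDerivAt t (hf.inner 𝕜 hTg)).congr_deriv
    (by simp [add_comm])

end Calculus

section MatCLM

variable {α β γ : Type*} [Fintype α] [Fintype β] [Fintype γ]

theorem matCLM_mul_apply [DecidableEq β] [DecidableEq γ] (A : Matrix α β ℂ) (B : Matrix β γ ℂ)
    (v : EuclideanSpace ℂ γ) : matCLM (A * B) v = matCLM A (matCLM B v) := by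
  simp [matCLM]

theorem matCLM_one_apply [DecidableEq α] (v : EuclideanSpace ℂ α) :
    matCLM (1 : Matrix α α ℂ) v = v := by
  simp [matCLM]

theorem inner_matCLM_left [DecidableEq α] [DecidableEq β] (A : Matrix α β ℂ)
    (x : EuclideanSpace ℂ β) (y : EuclideanSpace ℂ α) :
    ⟪matCLM A x, y⟫ = ⟪x, matCLM Aᴴ y⟫ := by
  simp only [matCLM, LinearMap.coe_toContinuousLinearMap',
    Matrix.toEuclideanLin_conjTranspose_eq_adjoint, LinearMap.adjoint_inner_right]

theorem Matrix.mulVec_injective_of_le_norm_matCLM [DecidableEq β] {A : Matrix α β ℂ} {c : ℝ}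
    (hc : 0 < c) (hA : ∀ v, c * ‖v‖ ≤ ‖matCLM A v‖) : Function.Injective A.mulVec := by
  intro u v huv
  set x := WithLp.toLp 2 (u - v)
  have hAx : matCLM A x = 0 := by
    ext i
    simp [x, matCLM, huv]
  have hcx : c * ‖x‖ ≤ 0 := by simpa [hAx] using hA x
  have hx : ‖x‖ = 0 := by nlinarith [norm_nonneg x]
  exact sub_eq_zero.mp (congrArg WithLp.ofLp (norm_eq_zero.mp hx))

end MatCLM

section Projection

open scoped ComplexOrder

variable {α β : Type*} [Fintype α] [Fintype β] [DecidableEq β]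

theorem Matrix.isUnit_det_conjTranspose_mul_self {G : Matrix α β ℂ}
    (hG : Function.Injective G.mulVec) : IsUnit (Gᴴ * G).det :=
  (Matrix.isUnit_iff_isUnit_det _).mp (Matrix.PosDef.conjTranspose_mul_self G hG).isUnit

theorem Matrix.pinv_mul_self {G : Matrix α β ℂ} (hG : IsUnit (Gᴴ * G).det) :
    (Gᴴ * G)⁻¹ * Gᴴ * G = 1 := by
  rw [Matrix.mul_assoc, Matrix.nonsing_inv_mul _ hG]

theorem Matrix.isHermitian_mul_pinv (G : Matrix α β ℂ) :
    (G * (Gᴴ * G)⁻¹ * Gᴴ).IsHermitian := by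
  simp only [Matrix.IsHermitian, Matrix.conjTranspose_mul, Matrix.conjTranspose_conjTranspose,
    Matrix.conjTranspose_nonsing_inv, Matrix.mul_assoc]

theorem Matrix.isIdempotentElem_mul_pinv {G : Matrix α β ℂ} (hG : IsUnit (Gᴴ * G).det) :
    IsIdempotentElem (G * (Gᴴ * G)⁻¹ * Gᴴ) :=
  calc G * (Gᴴ * G)⁻¹ * Gᴴ * (G * (Gᴴ * G)⁻¹ * Gᴴ)
      = G * ((Gᴴ * G)⁻¹ * Gᴴ * G * ((Gᴴ * G)⁻¹ * Gᴴ)) := by simp only [Matrix.mul_assoc]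
    _ = G * (Gᴴ * G)⁻¹ * Gᴴ := by rw [Matrix.pinv_mul_self hG, Matrix.one_mul, Matrix.mul_assoc]

theorem inner_matCLM_self_of_isHermitian_of_isIdempotentElem [DecidableEq α]
    {P : Matrix α α ℂ} (hP : P.IsHermitian) (hPP : IsIdempotentElem P) (s : EuclideanSpace ℂ α) :
    ⟪matCLM P s, matCLM P s⟫ = ⟪s, matCLM P s⟫ := by
  rw [inner_matCLM_left, hP.eq, ← matCLM_mul_apply, hPP.eq]

theorem inner_matCLM_conjTranspose_pinv [DecidableEq α] {G : Matrix α β ℂ}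
    (hG : IsUnit (Gᴴ * G).det) (s : EuclideanSpace ℂ α) :
    ⟪matCLM Gᴴ s, matCLM ((Gᴴ * G)⁻¹ * Gᴴ) s⟫ = (‖matCLM (G * (Gᴴ * G)⁻¹ * Gᴴ) s‖ ^ 2 : ℂ) := by
  rw [inner_matCLM_left, Matrix.conjTranspose_conjTranspose, ← matCLM_mul_apply,
    ← Matrix.mul_assoc, ← inner_matCLM_self_of_isHermitian_of_isIdempotentElem
      (Matrix.isHermitian_mul_pinv G) (Matrix.isIdempotentElem_mul_pinv hG),
    inner_self_eq_norm_sq_to_K]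
  rfl

end Projection

section Dynamics

variable {m n : ℕ}

theorem rblock_matCLM_blockM (G : Matrix (Fin m) (Fin n) ℂ) (w : Jvec n m) :
    rblock (matCLM (blockM G) w) = -matCLM Gᴴ (sblock w) := by
  ext i
  simp [rblock, sblock, matCLM, blockM, Matrix.mulVec, dotProduct, Fintype.sum_sum_type,
    Finset.sum_neg_distrib]

theorem sblock_matCLM_blockM (G : Matrix (Fin m) (Fin n) ℂ) (w : Jvec n m) :
    sblock (matCLM (blockM G) w) = matCLM G (rblock w) - sblock w := by
  ext j
  simp [rblock, sblock, matCLM, blockM, Matrix.mulVec, dotProduct, Fintype.sum_sum_type,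
    Matrix.one_apply, Finset.sum_neg_distrib, sub_eq_add_neg]

theorem HasDerivAt.rblock {f : ℝ → Jvec n m} {f' : Jvec n m} {t : ℝ} (hf : HasDerivAt f f' t) :
    HasDerivAt (fun τ => rblock (f τ)) (rblock f') t :=
  let rℝ : Jvec n m →ₗ[ℝ] Evec n := ⟨⟨_root_.rblock, fun _ _ => rfl⟩, fun _ _ => rfl⟩
  rℝ.toContinuousLinearMap.hasFDerivAt.comp_hasDerivAt t hf

theorem HasDerivAt.sblock {f : ℝ → Jvec n m} {f' : Jvec n m} {t : ℝ} (hf : HasDerivAt f f' t) :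
    HasDerivAt (fun τ => sblock (f τ)) (sblock f') t :=
  let sℝ : Jvec n m →ₗ[ℝ] Evec m := ⟨⟨_root_.sblock, fun _ _ => rfl⟩, fun _ _ => rfl⟩
  sℝ.toContinuousLinearMap.hasFDerivAt.comp_hasDerivAt t hf

theorem hasDerivAt_wdyn (G : Matrix (Fin m) (Fin n) ℂ) (b : Evec n) (t : ℝ) :
    HasDerivAt (wdyn G b) (matCLM (blockM G) (wdyn G b t)) t := by
  have hexp := hasDerivAt_exp_smul_const' (𝕂 := ℝ) (matCLM (blockM G)) t
  let evalAt : (Jvec n m →L[ℂ] Jvec n m) →L[ℝ] Jvec n m :=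
    (ContinuousLinearMap.apply ℂ (Jvec n m) (joinV b 0)).restrictScalars ℝ
  exact evalAt.hasFDerivAt.comp_hasDerivAt t hexp

theorem cross_term_deriv_eq {G : Matrix (Fin m) (Fin n) ℂ} (hG : IsUnit (Gᴴ * G).det)
    (w : Jvec n m) :
    RCLike.re ⟪rblock (matCLM (blockM G) w), matCLM ((Gᴴ * G)⁻¹ * Gᴴ) (sblock w)⟫
      + RCLike.re ⟪rblock w, matCLM ((Gᴴ * G)⁻¹ * Gᴴ) (sblock (matCLM (blockM G) w))⟫
      = -‖matCLM (G * (Gᴴ * G)⁻¹ * Gᴴ) (sblock w)‖ ^ 2 + ‖rblock w‖ ^ 2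
        - (⟪rblock w, matCLM ((Gᴴ * G)⁻¹ * Gᴴ) (sblock w)⟫).re := by
  rw [rblock_matCLM_blockM, sblock_matCLM_blockM, inner_neg_left, map_sub, inner_sub_right,
    ← matCLM_mul_apply, Matrix.pinv_mul_self hG, matCLM_one_apply,
    inner_matCLM_conjTranspose_pinv hG]
  simp only [map_neg, map_sub, inner_self_eq_norm_sq, RCLike.re_to_complex, ← Complex.ofReal_pow,
    Complex.ofReal_re]
  ring

end Dynamics

theorem stmt7_cross_term_derivative_general {m n : ℕ}
    (γ₀ : ℝ) (hγ : 0 < γ₀) (G : Matrix (Fin m) (Fin n) ℂ)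
    (hG : ∀ v : Evec n, γ₀ * ‖v‖ ≤ ‖matCLM G v‖) (b : Evec n) :
    ∀ t : ℝ,
      HasDerivAt
        (fun τ : ℝ => (⟪rblock (wdyn G b τ), matCLM ((Gᴴ * G)⁻¹ * Gᴴ) (sblock (wdyn G b τ))⟫).re)
        (-‖matCLM (G * (Gᴴ * G)⁻¹ * Gᴴ) (sblock (wdyn G b t))‖ ^ 2 + ‖rblock (wdyn G b t)‖ ^ 2
          - (⟪rblock (wdyn G b t), matCLM ((Gᴴ * G)⁻¹ * Gᴴ) (sblock (wdyn G b t))⟫).re) t := by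
  intro t
  have hdet := Matrix.isUnit_det_conjTranspose_mul_self (G.mulVec_injective_of_le_norm_matCLM hγ hG)
  have hw := hasDerivAt_wdyn G b t
  exact (hw.rblock.re_inner_clm_apply _ hw.sblock).congr_deriv (cross_term_deriv_eq hdet _)

theorem stmt7_cross_term_derivative {m n : ℕ} (hm : 0 < m) (hn : 0 < n)
    (γ₀ : ℝ) (hγ : 0 < γ₀) (G : Matrix (Fin m) (Fin n) ℂ)
    (hG : ∀ v : Evec n, γ₀ * ‖v‖ ≤ ‖matCLM G v‖) (b : Evec n) :
    ∀ t : ℝ,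
      HasDerivAt
        (fun τ : ℝ => (⟪rblock (wdyn G b τ), matCLM ((Gᴴ * G)⁻¹ * Gᴴ) (sblock (wdyn G b τ))⟫).re)
        (-‖matCLM (G * (Gᴴ * G)⁻¹ * Gᴴ) (sblock (wdyn G b t))‖ ^ 2 + ‖rblock (wdyn G b t)‖ ^ 2
          - (⟪rblock (wdyn G b t), matCLM ((Gᴴ * G)⁻¹ * Gᴴ) (sblock (wdyn G b t))⟫).re) t :=
  stmt7_cross_term_derivative_general γ₀ hγ G hG b
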